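/- arXiv:1111.2498 — 2 statements merged into one kernel-verified Lean document; each statement's English description precedes it below -/
import Mathlib

section
/- The volume of an ideal hyperbolic tetrahedron with dihedral angles α, β, γ (where α + β + γ = π, and opposite edges have equal angles) equals Л(α) + Л(β) + Л(γ), where Л is the Lobachevsky function; this volume is maximized when α = β = γ = π/3, giving the maximal volume 3Л(π/3). -/
/-
Since `Л' = -log |2 sin|`, for a fixed sum `s < π` the function `x ↦ Л(x) + Л(s - x)` increases
while `sin x < sin (s - x)` and decreases afterwards, so replacing `α, β` by their mean `m` strictly
increases the volume unless `α = β`. What remains is `2 Л(m) + Л(π - 2m)`, whose derivative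
`2 log (sin 2m / sin m) = 2 log (2 cos m)` changes sign exactly at `m = π/3`.
-/

open Real

/-- The Lobachevsky function `Л(θ) = -∫₀^θ log |2 sin u| du`. -/
noncomputable def lobachevsky (θ : ℝ) : ℝ :=
  -∫ u in (0 : ℝ)..θ, Real.log |2 * Real.sin u|

open Set

theorem Real.sin_lt_sin_of_add_lt_pi {u v : ℝ} (hu : 0 ≤ u) (huv : u < v) (h : u + v < π) :
    sin u < sin v := by
  have hsub : 0 < sin ((v - u) / 2) := sin_pos_of_pos_of_lt_pi (by linarith) (by linarith)
  have hcos : 0 < cos ((v + u) / 2) := cos_pos_of_mem_Ioo ⟨by linarith, by linarith⟩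
  have := sin_sub_sin v u
  nlinarith [mul_pos hsub hcos]

theorem Real.log_abs_two_mul_sin_lt {u v : ℝ} (hu : 0 < u) (huv : u < v) (h : u + v < π) :
    log |2 * sin u| < log |2 * sin v| := by
  have hsin : 0 < sin u := sin_pos_of_pos_of_lt_pi hu (by linarith)
  have hlt := sin_lt_sin_of_add_lt_pi hu.le huv h
  rw [abs_of_pos (by positivity), abs_of_pos (by linarith)]
  exact log_lt_log (by positivity) (by linarith)

theorem lt_of_hasDerivAt_pos_of_neg {f f' : ℝ → ℝ} {a b c x : ℝ}
    (hf : ∀ y ∈ Ioo a b, HasDerivAt f (f' y) y)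
    (hpos : ∀ y ∈ Ioo a c, 0 < f' y) (hneg : ∀ y ∈ Ioo c b, f' y < 0)
    (hx : x ∈ Ioo a b) (hc : c ∈ Ioo a b) (hxc : x ≠ c) : f x < f c := by
  have hcont : ContinuousOn f (Ioo a b) := fun y hy => (hf y hy).continuousAt.continuousWithinAt
  rcases hxc.lt_or_gt with h | h
  · have hmono : StrictMonoOn f (Ioc a c) :=
      strictMonoOn_of_deriv_pos (convex_Ioc a c) (hcont.mono (Ioc_subset_Ioo_right hc.2))
        fun y hy => by
          rw [interior_Ioc] at hy
          rw [(hf y ⟨hy.1, hy.2.trans hc.2⟩).deriv]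
          exact hpos y hy
    exact hmono ⟨hx.1, h.le⟩ ⟨hc.1, le_rfl⟩ h
  · have hanti : StrictAntiOn f (Ico c b) :=
      strictAntiOn_of_deriv_neg (convex_Ico c b) (hcont.mono (Ico_subset_Ioo_left hc.1))
        fun y hy => by
          rw [interior_Ico] at hy
          rw [(hf y ⟨hc.1.trans hy.1, hy.2⟩).deriv]
          exact hneg y hy
    exact hanti ⟨le_rfl, hc.2⟩ ⟨h.le, hx.2⟩ h

theorem intervalIntegrable_log_abs_two_mul_sin (a b : ℝ) :
    IntervalIntegrable (fun u => log |2 * sin u|) MeasureTheory.volume a b :=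
  (analyticOnNhd_const.mul analyticOnNhd_sin).meromorphicOn.intervalIntegrable_log_norm

theorem hasDerivAt_lobachevsky {θ : ℝ} (hθ : sin θ ≠ 0) :
    HasDerivAt lobachevsky (-log |2 * sin θ|) θ := by
  have hcont : ContinuousAt (fun u => log |2 * sin u|) θ :=
    (continuous_const.mul continuous_sin).abs.continuousAt.log (by simpa using hθ)
  have hmeas : Measurable (fun u => log |2 * sin u|) := by fun_prop
  unfold lobachevsky
  exact (intervalIntegral.integral_hasDerivAt_right (intervalIntegrable_log_abs_two_mul_sin 0 θ)
    hmeas.aestronglyMeasurable.stronglyMeasurableAtFilter hcont).neg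

theorem hasDerivAt_lobachevsky_of_mem_Ioo {θ : ℝ} (hθ : θ ∈ Ioo 0 π) :
    HasDerivAt lobachevsky (-log |2 * sin θ|) θ :=
  hasDerivAt_lobachevsky (sin_pos_of_pos_of_lt_pi hθ.1 hθ.2).ne'

theorem lobachevsky_add_lt_two_mul_lobachevsky_midpoint {x y : ℝ} (hx : 0 < x) (hy : 0 < y)
    (hxy : x + y < π) (hne : x ≠ y) :
    lobachevsky x + lobachevsky y < 2 * lobachevsky ((x + y) / 2) := by
  set s := x + y
  have key : lobachevsky x + lobachevsky (s - x) < lobachevsky (s / 2) + lobachevsky (s - s / 2) :=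
    lt_of_hasDerivAt_pos_of_neg (f := fun t => lobachevsky t + lobachevsky (s - t))
      (f' := fun t => log |2 * sin (s - t)| - log |2 * sin t|) (a := 0) (b := s)
      (fun t ht => ?_) (fun t ht => ?_) (fun t ht => ?_) ⟨hx, by linarith⟩
      ⟨by linarith, by linarith⟩ (fun h => hne (by linarith))
  · rw [show s - x = y by ring, show s - s / 2 = s / 2 by ring] at key
    linarith
  · have hleft := hasDerivAt_lobachevsky_of_mem_Ioo (θ := t) ⟨ht.1, by linarith [ht.2]⟩
    have hright := (hasDerivAt_lobachevsky_of_mem_Ioo (θ := s - t) ⟨by linarith [ht.2],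
      by linarith [ht.1]⟩).comp t ((hasDerivAt_id t).const_sub s)
    exact (hleft.add hright).congr_deriv (by ring)
  · exact sub_pos.2 (log_abs_two_mul_sin_lt ht.1 (by linarith [ht.2]) (by linarith [ht.1]))
  · exact sub_neg.2 (log_abs_two_mul_sin_lt (by linarith [ht.2]) (by linarith [ht.1])
      (by linarith))

theorem two_mul_lobachevsky_add_lobachevsky_pi_sub_two_mul_lt {m : ℝ} (h0 : 0 < m)
    (h1 : m < π / 2) (hne : m ≠ π / 3) :
    2 * lobachevsky m + lobachevsky (π - 2 * m) < 3 * lobachevsky (π / 3) := by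
  have key : 2 * lobachevsky m + lobachevsky (π - 2 * m)
      < 2 * lobachevsky (π / 3) + lobachevsky (π - 2 * (π / 3)) :=
    lt_of_hasDerivAt_pos_of_neg (f := fun t => 2 * lobachevsky t + lobachevsky (π - 2 * t))
      (f' := fun t => 2 * (log |2 * sin (π - 2 * t)| - log |2 * sin t|))
      (a := 0) (b := π / 2) (fun t ht => ?_) (fun t ht => ?_) (fun t ht => ?_) ⟨h0, h1⟩
      ⟨by positivity, by linarith [pi_pos]⟩ hne
  · rw [show π - 2 * (π / 3) = π / 3 by ring] at key
    linarith
  · have hleft := hasDerivAt_lobachevsky_of_mem_Ioo (θ := t) ⟨ht.1, by linarith [ht.2, pi_pos]⟩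
    have hright := (hasDerivAt_lobachevsky_of_mem_Ioo (θ := π - 2 * t) ⟨by linarith [ht.2],
      by linarith [ht.1]⟩).comp t (((hasDerivAt_id t).const_mul 2).const_sub π)
    exact ((hleft.const_mul 2).add hright).congr_deriv (by ring)
  · have := log_abs_two_mul_sin_lt (u := t) (v := π - 2 * t) ht.1 (by linarith [ht.2])
      (by linarith [ht.1])
    linarith
  · have := log_abs_two_mul_sin_lt (u := π - 2 * t) (v := t) (by linarith [ht.2])
      (by linarith [ht.1]) (by linarith [ht.1])
    linarith

theorem lobachevsky_add_le_two_mul_lobachevsky_midpoint {x y : ℝ} (hx : 0 < x) (hy : 0 < y)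
    (hxy : x + y < π) : lobachevsky x + lobachevsky y ≤ 2 * lobachevsky ((x + y) / 2) := by
  rcases eq_or_ne x y with rfl | hne
  · rw [add_self_div_two, two_mul]
  · exact (lobachevsky_add_lt_two_mul_lobachevsky_midpoint hx hy hxy hne).le

theorem two_mul_lobachevsky_add_lobachevsky_pi_sub_two_mul_le {m : ℝ} (h0 : 0 < m)
    (h1 : m < π / 2) : 2 * lobachevsky m + lobachevsky (π - 2 * m) ≤ 3 * lobachevsky (π / 3) := by
  rcases eq_or_ne m (π / 3) with rfl | hne
  · rw [show π - 2 * (π / 3) = π / 3 by ring]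
    linarith
  · exact (two_mul_lobachevsky_add_lobachevsky_pi_sub_two_mul_lt h0 h1 hne).le

/-- The volume `Л(α) + Л(β) + Л(γ)` of an ideal hyperbolic tetrahedron with dihedral
angles `α, β, γ` (with `α + β + γ = π`) is maximized exactly at the regular case
`α = β = γ = π/3`, with maximal value `3·Л(π/3)`. -/
theorem ideal_tetrahedron_volume_max (α β γ : ℝ) (hα : 0 < α) (hβ : 0 < β) (hγ : 0 < γ)
    (hsum : α + β + γ = π) :
    lobachevsky α + lobachevsky β + lobachevsky γ ≤ 3 * lobachevsky (π / 3) ∧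
    (lobachevsky α + lobachevsky β + lobachevsky γ = 3 * lobachevsky (π / 3) ↔
      α = π / 3 ∧ β = π / 3 ∧ γ = π / 3) := by
  set m := (α + β) / 2 with hm
  obtain rfl : γ = π - 2 * m := by linarith
  have hpair := lobachevsky_add_le_two_mul_lobachevsky_midpoint hα hβ (by linarith)
  have hm0 : 0 < m := by positivity
  have hm1 : m < π / 2 := by linarith
  have hmean := two_mul_lobachevsky_add_lobachevsky_pi_sub_two_mul_le hm0 hm1
  refine ⟨by linarith, fun heq => ?_, fun ⟨hα', hβ', _⟩ => ?_⟩
  · have hαβ : α = β := by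
      by_contra hne
      linarith [lobachevsky_add_lt_two_mul_lobachevsky_midpoint hα hβ (by linarith) hne]
    have hmπ : m = π / 3 := by
      by_contra hne
      linarith [two_mul_lobachevsky_add_lobachevsky_pi_sub_two_mul_lt hm0 hm1 hne]
    refine ⟨?_, ?_, ?_⟩ <;> linarith
  · rw [show m = π / 3 by linarith, hα', hβ', show π - 2 * (π / 3) = π / 3 by ring]
    ring
end

section
/- For nonnegative reals α, β, γ with α + β + γ = π, the function (α, β, γ) ↦ Л(α) + Л(β) + Л(γ) on the simplex {α, β, γ ≥ 0, α + β + γ = π} attains its maximum uniquely at (π/3, π/3, π/3). -/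
open Real MeasureTheory Set intervalIntegral

namespace LobachevskyAux

noncomputable def f (u : ℝ) : ℝ := Real.log |2 * Real.sin u|

lemma measurable_f : Measurable f := by
  exact Real.measurable_log.comp ((Real.measurable_sin.const_mul 2).abs)

lemma f_pi_sub (x : ℝ) : f (π - x) = f x := by
  simp [f, Real.sin_pi_sub]

lemma integrableOn_neg_log : IntegrableOn (fun u : ℝ => -Real.log u) (Ioc (0:ℝ) 1) := by
  have hc : ContinuousOn (fun x : ℝ => x - x * Real.log x) (Icc 0 1) :=
    (continuous_id.sub Real.continuous_mul_log).continuousOn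
  have hd : ∀ x ∈ Ioo (0:ℝ) 1, HasDerivAt (fun x : ℝ => x - x * Real.log x) (-Real.log x) x := by
    intro x hx
    have h : HasDerivAt (fun x : ℝ => x - x * Real.log x) (1 - (Real.log x + 1)) x :=
      (hasDerivAt_id x).sub (Real.hasDerivAt_mul_log hx.1.ne')
    convert h using 1
    ring
  have hpos : ∀ x ∈ Ioo (0:ℝ) 1, 0 ≤ -Real.log x := by
    intro x hx
    have := Real.log_nonpos hx.1.le hx.2.le
    linarith
  exact integrableOn_deriv_of_nonneg hc hd hpos

lemma int01 : IntervalIntegrable f volume 0 1 := by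
  rw [intervalIntegrable_iff_integrableOn_Ioc_of_le (by norm_num)]
  have hg : IntegrableOn (fun u : ℝ => -Real.log u + Real.log 2) (Ioc (0:ℝ) 1) :=
    integrableOn_neg_log.add (integrableOn_const (by simp))
  refine Integrable.mono' hg (measurable_f.aestronglyMeasurable.restrict) ?_
  filter_upwards [ae_restrict_mem measurableSet_Ioc] with u hu
  obtain ⟨hu0, hu1⟩ := hu
  have hupi : u ≤ π / 2 := hu1.trans (by linarith [Real.pi_gt_three])
  have hsin : Real.sin u ≤ u := (Real.sin_lt hu0).le
  have hsin' : u ≤ 2 * Real.sin u := by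
    have h1 := Real.mul_le_sin hu0.le hupi
    have h2 : (1:ℝ)/2 ≤ 2/π := by
      rw [div_le_div_iff₀ (by norm_num) Real.pi_pos]
      linarith [Real.pi_le_four]
    have h3 : (1:ℝ)/2 * u ≤ 2/π * u := mul_le_mul_of_nonneg_right h2 hu0.le
    linarith
  have h2s : (0:ℝ) < 2 * Real.sin u := lt_of_lt_of_le hu0 hsin'
  have hfu : f u = Real.log (2 * Real.sin u) := by
    rw [f, abs_of_pos h2s]
  rw [hfu, Real.norm_eq_abs]
  rw [abs_le]
  constructor
  · have h1 : Real.log u ≤ Real.log (2 * Real.sin u) := Real.log_le_log hu0 hsin'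
    have h2 : (0:ℝ) < Real.log 2 := Real.log_pos (by norm_num)
    linarith
  · have h1 : Real.log (2 * Real.sin u) ≤ Real.log (2 * u) :=
      Real.log_le_log h2s (by linarith)
    rw [Real.log_mul (by norm_num) hu0.ne'] at h1
    have h2 : Real.log u ≤ 0 := Real.log_nonpos hu0.le hu1
    linarith

lemma int_mid : IntervalIntegrable f volume 1 (π - 1) := by
  apply ContinuousOn.intervalIntegrable
  apply ContinuousOn.log
  · fun_prop
  · intro x hx
    rw [uIcc_of_le (by linarith [Real.pi_gt_three])] at hx
    have h1 : (0:ℝ) < x := lt_of_lt_of_le one_pos hx.1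
    have h2 : x < π := lt_of_le_of_lt hx.2 (by linarith [Real.pi_pos])
    have := Real.sin_pos_of_pos_of_lt_pi h1 h2
    simp only [abs_ne_zero]
    positivity

lemma int_right : IntervalIntegrable f volume (π - 1) π := by
  have h := int01.comp_sub_left π
  have he : (fun x => f (π - x)) = f := funext f_pi_sub
  rw [he] at h
  simpa using h.symm

lemma J : IntervalIntegrable f volume 0 π :=
  (int01.trans int_mid).trans int_right

lemma intK {a b : ℝ} (ha : a ∈ Icc (0:ℝ) π) (hb : b ∈ Icc (0:ℝ) π) :
    IntervalIntegrable f volume a b := by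
  apply J.mono_set
  rw [uIcc_of_le Real.pi_pos.le]
  exact uIcc_subset_Icc ha hb


lemma lob_eq (θ : ℝ) : lobachevsky θ = -∫ u in (0:ℝ)..θ, f u := rfl

lemma L0 : lobachevsky 0 = 0 := by simp [lobachevsky]

lemma contL : ContinuousOn lobachevsky (Icc 0 π) := by
  have h : IntegrableOn f (uIcc 0 π) volume := by
    rw [uIcc_of_le Real.pi_pos.le]
    exact (intervalIntegrable_iff_integrableOn_Icc_of_le Real.pi_pos.le).1 J
  have := (continuousOn_primitive_interval h).neg
  rw [uIcc_of_le Real.pi_pos.le] at this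
  exact this

lemma hasDerivL {θ : ℝ} (h0 : 0 < θ) (hπ : θ < π) :
    HasDerivAt lobachevsky (-Real.log (2 * Real.sin θ)) θ := by
  have hs : 0 < Real.sin θ := Real.sin_pos_of_pos_of_lt_pi h0 hπ
  have hcont : ContinuousAt f θ := by
    apply ContinuousAt.log
    · exact ((continuous_const.mul Real.continuous_sin).abs).continuousAt
    · simp only [abs_ne_zero]
      positivity
  have hd := integral_hasDerivAt_right
    (intK (left_mem_Icc.2 Real.pi_pos.le) ⟨h0.le, hπ.le⟩)
    (measurable_f.stronglyMeasurable.stronglyMeasurableAtFilter) hcont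
  have := hd.neg
  have hfθ : f θ = Real.log (2 * Real.sin θ) := by
    rw [f, abs_of_pos (by positivity)]
  rw [hfθ] at this
  exact this

lemma derivL {θ : ℝ} (h0 : 0 < θ) (hπ : θ < π) :
    deriv lobachevsky θ = -Real.log (2 * Real.sin θ) :=
  (hasDerivL h0 hπ).deriv

lemma conc : StrictConcaveOn ℝ (Icc 0 (π/2)) lobachevsky := by
  apply StrictAntiOn.strictConcaveOn_of_deriv (convex_Icc _ _)
  · exact contL.mono (Icc_subset_Icc le_rfl (by linarith [Real.pi_pos]))
  · rw [interior_Icc]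
    intro x hx y hy hxy
    have hx2 : x < π := by have := Real.pi_pos; cases hx; linarith
    have hy2 : y < π := by have := Real.pi_pos; cases hy; linarith
    rw [derivL hx.1 hx2, derivL hy.1 hy2]
    have hsx : 0 < Real.sin x := Real.sin_pos_of_pos_of_lt_pi hx.1 hx2
    have hmono : Real.sin x < Real.sin y := by
      apply Real.strictMonoOn_sin _ _ hxy
      · constructor <;> [linarith [hx.1, Real.pi_pos]; linarith [hx.2]]
      · constructor <;> [linarith [hy.1, Real.pi_pos]; linarith [hy.2]]
    have := Real.log_lt_log (by positivity) (by linarith : 2 * Real.sin x < 2 * Real.sin y)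
    linarith

lemma mono1 : StrictMonoOn lobachevsky (Icc 0 (π/6)) := by
  apply strictMonoOn_of_deriv_pos (convex_Icc _ _)
  · exact contL.mono (Icc_subset_Icc le_rfl (by linarith [Real.pi_pos]))
  · rw [interior_Icc]
    intro x hx
    have hπ := Real.pi_pos
    have hx2 : x < π := by cases hx; linarith
    rw [derivL hx.1 hx2]
    have hs : Real.sin x < 1/2 := by
      rw [← Real.sin_pi_div_six]
      apply Real.strictMonoOn_sin _ _ hx.2
      · constructor <;> [linarith [hx.1]; linarith [hx.2]]
      · constructor <;> linarith
    have hsx : 0 < Real.sin x := Real.sin_pos_of_pos_of_lt_pi hx.1 hx2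
    have := Real.log_neg (by positivity) (by linarith : 2 * Real.sin x < 1)
    linarith

lemma anti1 : StrictAntiOn lobachevsky (Icc (π/6) (π/2)) := by
  apply strictAntiOn_of_deriv_neg (convex_Icc _ _)
  · exact contL.mono (Icc_subset_Icc (by linarith [Real.pi_pos]) (by linarith [Real.pi_pos]))
  · rw [interior_Icc]
    intro x hx
    have hπ := Real.pi_pos
    have hx0 : 0 < x := by cases hx; linarith
    have hx2 : x < π := by cases hx; linarith
    rw [derivL hx0 hx2]
    have hs : 1/2 < Real.sin x := by
      rw [← Real.sin_pi_div_six]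
      apply Real.strictMonoOn_sin _ _ hx.1
      · constructor <;> linarith
      · constructor <;> [linarith [hx.1]; linarith [hx.2]]
    have := Real.log_pos (by linarith : 1 < 2 * Real.sin x)
    linarith

lemma refl_eq {θ : ℝ} (hθ : θ ∈ Icc (0:ℝ) π) :
    lobachevsky (π - θ) = lobachevsky π - lobachevsky θ := by
  have hθ' : π - θ ∈ Icc (0:ℝ) π := ⟨by linarith [hθ.2], by linarith [hθ.1]⟩
  have h1 : ∫ x in (0:ℝ)..θ, f (π - x) = ∫ x in (π - θ)..(π - 0), f x :=
    integral_comp_sub_left f π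
  have h1' : (fun x => f (π - x)) = f := funext f_pi_sub
  rw [h1', sub_zero] at h1
  have h2 : (∫ x in (0:ℝ)..(π-θ), f x) + ∫ x in (π-θ)..π, f x = ∫ x in (0:ℝ)..π, f x :=
    integral_add_adjacent_intervals (intK (left_mem_Icc.2 Real.pi_pos.le) hθ')
      (intK hθ' (right_mem_Icc.2 Real.pi_pos.le))
  simp only [lob_eq]
  rw [← h2, ← h1]
  ring

lemma dup {θ : ℝ} (h0 : 0 < θ) (h2 : θ ≤ π/2) :
    lobachevsky (2*θ) = 2*lobachevsky θ + 2*lobachevsky (π/2) - 2*lobachevsky (π/2 - θ) := by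
  have hπ := Real.pi_pos
  have hmem : θ ∈ Icc (0:ℝ) π := ⟨h0.le, by linarith⟩
  have hmem2 : π/2 - θ ∈ Icc (0:ℝ) π := ⟨by linarith, by linarith⟩
  have hmemh : (π/2:ℝ) ∈ Icc (0:ℝ) π := ⟨by linarith, by linarith⟩
  have hmem0 : (0:ℝ) ∈ Icc (0:ℝ) π := ⟨le_rfl, hπ.le⟩
  have hae : ∀ᵐ x : ℝ, x ≠ π/2 := by
    refine ae_iff.2 ?_
    have he : {x : ℝ | ¬ x ≠ π/2} = {π/2} := by ext x; simp
    rw [he]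
    exact measure_singleton _
  have hcongr : ∫ x in (0:ℝ)..θ, f (2*x) = ∫ x in (0:ℝ)..θ, (f x + f (π/2 - x)) := by
    apply intervalIntegral.integral_congr_ae
    filter_upwards [hae] with x hx hxI
    rw [uIoc_of_le h0.le] at hxI
    have hx0 : 0 < x := hxI.1
    have hxle : x ≤ π/2 := hxI.2.trans h2
    have hxlt : x < π/2 := lt_of_le_of_ne hxle hx
    have hsin : 0 < Real.sin x := Real.sin_pos_of_pos_of_lt_pi hx0 (by linarith)
    have hcos : 0 < Real.cos x := Real.cos_pos_of_mem_Ioo ⟨by linarith, hxlt⟩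
    have e1 : (2:ℝ) * Real.sin (2*x) = (2*Real.sin x) * (2*Real.cos x) := by
      rw [Real.sin_two_mul]; ring
    show Real.log |2 * Real.sin (2*x)| = f x + f (π/2 - x)
    rw [e1, abs_mul, Real.log_mul (abs_ne_zero.2 (by positivity)) (abs_ne_zero.2 (by positivity))]
    congr 1
    rw [f, Real.sin_pi_div_two_sub]
  have hsub : ∫ x in (0:ℝ)..θ, f (π/2 - x) = ∫ x in (π/2 - θ)..(π/2), f x := by
    have h := integral_comp_sub_left (a := 0) (b := θ) f (π/2)
    rwa [sub_zero] at h
  have hadd : (∫ x in (0:ℝ)..(π/2 - θ), f x) + ∫ x in (π/2 - θ)..(π/2), f x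
      = ∫ x in (0:ℝ)..(π/2), f x :=
    integral_add_adjacent_intervals (intK hmem0 hmem2) (intK hmem2 hmemh)
  have hint1 : IntervalIntegrable f volume 0 θ := intK hmem0 hmem
  have hint2 : IntervalIntegrable (fun x => f (π/2 - x)) volume 0 θ := by
    have h := ((intK hmem2 hmemh).comp_sub_left (π/2)).symm
    have e1 : π/2 - (π/2 - θ) = θ := by ring
    rw [e1, sub_self] at h
    exact h
  have hmul : ∫ x in (0:ℝ)..θ, f (2*x) = 2⁻¹ * ∫ x in (0:ℝ)..(2*θ), f x := by
    have h := integral_comp_mul_left (a := 0) (b := θ) f (c := 2) two_ne_zero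
    simpa using h
  have h2θ : 2 * θ ∈ Icc (0:ℝ) π := ⟨by linarith, by linarith⟩
  have key : (2:ℝ)⁻¹ * ∫ x in (0:ℝ)..(2*θ), f x
      = (∫ x in (0:ℝ)..θ, f x)
        + ((∫ x in (0:ℝ)..(π/2), f x) - ∫ x in (0:ℝ)..(π/2 - θ), f x) := by
    rw [← hmul, hcongr, intervalIntegral.integral_add hint1 hint2, hsub]
    linarith [hadd]
  simp only [lob_eq]
  linarith [key]

lemma Lpi2 : lobachevsky (π/2) = 0 := by
  have hπ := Real.pi_pos
  have h := dup (θ := π/4) (by positivity) (by linarith)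
  rw [show 2 * (π/4) = π/2 by ring, show π/2 - π/4 = π/4 by ring] at h
  linarith

lemma Lpi : lobachevsky π = 0 := by
  have hπ := Real.pi_pos
  have h := refl_eq (θ := π/2) ⟨by linarith, by linarith⟩
  rw [show π - π/2 = π/2 by ring] at h
  linarith [Lpi2]

lemma refl' {θ : ℝ} (hθ : θ ∈ Icc (0:ℝ) π) : lobachevsky (π - θ) = -lobachevsky θ := by
  rw [refl_eq hθ, Lpi]; ring

lemma key_val : 2 * lobachevsky (π/6) = 3 * lobachevsky (π/3) := by
  have hπ := Real.pi_pos
  have h := dup (θ := π/3) (by positivity) (by linarith)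
  rw [show π/2 - π/3 = π/6 by ring] at h
  have h2 := refl' (θ := π/3) ⟨by linarith, by linarith⟩
  rw [show π - π/3 = 2*(π/3) by ring] at h2
  rw [Lpi2] at h
  linarith

lemma max6 {θ : ℝ} (h0 : 0 ≤ θ) (h2 : θ ≤ π/2) : lobachevsky θ ≤ lobachevsky (π/6) := by
  have hπ := Real.pi_pos
  rcases le_total θ (π/6) with h | h
  · exact mono1.monotoneOn ⟨h0, h⟩ ⟨by linarith, le_rfl⟩ h
  · exact anti1.antitoneOn ⟨le_rfl, by linarith⟩ ⟨h, h2⟩ h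

lemma pos_of {θ : ℝ} (h0 : 0 < θ) (h2 : θ < π/2) : 0 < lobachevsky θ := by
  have hπ := Real.pi_pos
  rcases le_total θ (π/6) with h | h
  · have := mono1 ⟨le_rfl, by linarith⟩ ⟨h0.le, h⟩ h0
    rwa [L0] at this
  · have := anti1 ⟨h, h2.le⟩ ⟨by linarith, le_rfl⟩ h2
    rw [Lpi2] at this
    linarith

lemma neg_of {θ : ℝ} (h0 : π/2 < θ) (h2 : θ < π) : lobachevsky θ < 0 := by
  have hπ := Real.pi_pos
  have h := refl' (θ := π - θ) ⟨by linarith, by linarith⟩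
  rw [show π - (π - θ) = θ by ring] at h
  have := pos_of (θ := π - θ) (by linarith) (by linarith)
  linarith

lemma jensen_le {a b c : ℝ} (ha : a ∈ Icc (0:ℝ) (π/2)) (hb : b ∈ Icc (0:ℝ) (π/2))
    (hc : c ∈ Icc (0:ℝ) (π/2)) (hsum : a + b + c = π) :
    lobachevsky a + lobachevsky b + lobachevsky c ≤ 3 * lobachevsky (π/3) := by
  have hp : (a+b)/2 ∈ Icc (0:ℝ) (π/2) :=
    ⟨by have := ha.1; have := hb.1; linarith, by have := ha.2; have := hb.2; linarith⟩
  have h1 : lobachevsky a + lobachevsky b ≤ 2 * lobachevsky ((a+b)/2) := by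
    have h := conc.concaveOn.2 ha hb (by norm_num : (0:ℝ) ≤ 1/2) (by norm_num : (0:ℝ) ≤ 1/2)
      (by norm_num)
    simp only [smul_eq_mul] at h
    rw [show (1:ℝ)/2 * a + 1/2 * b = (a+b)/2 by ring] at h
    linarith
  have h2 : 2 * lobachevsky ((a+b)/2) + lobachevsky c ≤ 3 * lobachevsky (π/3) := by
    have h := conc.concaveOn.2 hp hc (by norm_num : (0:ℝ) ≤ 2/3) (by norm_num : (0:ℝ) ≤ 1/3)
      (by norm_num)
    simp only [smul_eq_mul] at h
    rw [show (2:ℝ)/3 * ((a+b)/2) + 1/3 * c = π/3 by rw [← hsum]; ring] at h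
    linarith
  linarith

lemma jensen_lt {a b c : ℝ} (ha : a ∈ Icc (0:ℝ) (π/2)) (hb : b ∈ Icc (0:ℝ) (π/2))
    (hc : c ∈ Icc (0:ℝ) (π/2)) (hsum : a + b + c = π)
    (hne : ¬(a = π/3 ∧ b = π/3 ∧ c = π/3)) :
    lobachevsky a + lobachevsky b + lobachevsky c < 3 * lobachevsky (π/3) := by
  have hp : (a+b)/2 ∈ Icc (0:ℝ) (π/2) :=
    ⟨by have := ha.1; have := hb.1; linarith, by have := ha.2; have := hb.2; linarith⟩
  by_cases hab : a = b
  · have hk : (a+b)/2 ≠ c := by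
      intro hcc
      exact hne ⟨by linarith, by linarith, by linarith⟩
    have h1 : lobachevsky a + lobachevsky b = 2 * lobachevsky ((a+b)/2) := by
      rw [← hab, show (a+a)/2 = a by ring]
      ring
    have h2 : 2 * lobachevsky ((a+b)/2) + lobachevsky c < 3 * lobachevsky (π/3) := by
      have h := conc.2 hp hc hk (by norm_num : (0:ℝ) < 2/3) (by norm_num : (0:ℝ) < 1/3)
        (by norm_num)
      simp only [smul_eq_mul] at h
      rw [show (2:ℝ)/3 * ((a+b)/2) + 1/3 * c = π/3 by rw [← hsum]; ring] at h
      linarith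
    linarith
  · have h1 : lobachevsky a + lobachevsky b < 2 * lobachevsky ((a+b)/2) := by
      have h := conc.2 ha hb hab (by norm_num : (0:ℝ) < 1/2) (by norm_num : (0:ℝ) < 1/2)
        (by norm_num)
      simp only [smul_eq_mul] at h
      rw [show (1:ℝ)/2 * a + 1/2 * b = (a+b)/2 by ring] at h
      linarith
    have h2 : 2 * lobachevsky ((a+b)/2) + lobachevsky c ≤ 3 * lobachevsky (π/3) := by
      have h := conc.concaveOn.2 hp hc (by norm_num : (0:ℝ) ≤ 2/3) (by norm_num : (0:ℝ) ≤ 1/3)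
        (by norm_num)
      simp only [smul_eq_mul] at h
      rw [show (2:ℝ)/3 * ((a+b)/2) + 1/3 * c = π/3 by rw [← hsum]; ring] at h
      linarith
    linarith

lemma caseB {a b c : ℝ} (ha : 0 ≤ a) (hb : 0 ≤ b) (hc : π/2 < c) (hsum : a + b + c = π) :
    lobachevsky a + lobachevsky b + lobachevsky c < 3 * lobachevsky (π/3) := by
  have hπ := Real.pi_pos
  have hcπ : c ≤ π := by linarith
  have hp3 : 0 < lobachevsky (π/3) := pos_of (by positivity) (by linarith)
  rcases eq_or_lt_of_le hcπ with heq | hlt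
  · have ha0 : a = 0 := by linarith
    have hb0 : b = 0 := by linarith
    rw [ha0, hb0, heq, L0, Lpi]
    linarith
  · have hna : lobachevsky a ≤ lobachevsky (π/6) := max6 ha (by linarith)
    have hnb : lobachevsky b ≤ lobachevsky (π/6) := max6 hb (by linarith)
    have hnc : lobachevsky c < 0 := neg_of hc hlt
    linarith [key_val]

end LobachevskyAux

/-- On the simplex `{α, β, γ ≥ 0, α + β + γ = π}` the function
`(α, β, γ) ↦ Л(α) + Л(β) + Л(γ)` attains its maximum uniquely at `(π/3, π/3, π/3)`. -/
theorem lobachevsky_sum_max_on_simplex (α β γ : ℝ)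
    (hα : 0 ≤ α) (hβ : 0 ≤ β) (hγ : 0 ≤ γ) (hsum : α + β + γ = π) :
    lobachevsky α + lobachevsky β + lobachevsky γ ≤ 3 * lobachevsky (π / 3) ∧
    (lobachevsky α + lobachevsky β + lobachevsky γ = 3 * lobachevsky (π / 3) ↔
      α = π / 3 ∧ β = π / 3 ∧ γ = π / 3) := by
  have hπ := Real.pi_pos
  by_cases hcase : α ≤ π/2 ∧ β ≤ π/2 ∧ γ ≤ π/2
  · obtain ⟨h1, h2, h3⟩ := hcase
    have ha : α ∈ Set.Icc (0:ℝ) (π/2) := ⟨hα, h1⟩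
    have hb : β ∈ Set.Icc (0:ℝ) (π/2) := ⟨hβ, h2⟩
    have hc : γ ∈ Set.Icc (0:ℝ) (π/2) := ⟨hγ, h3⟩
    refine ⟨LobachevskyAux.jensen_le ha hb hc hsum, fun heq => ?_, ?_⟩
    · by_contra hne
      exact absurd heq (ne_of_lt (LobachevskyAux.jensen_lt ha hb hc hsum hne))
    · rintro ⟨rfl, rfl, rfl⟩
      ring
  · have hlt : lobachevsky α + lobachevsky β + lobachevsky γ < 3 * lobachevsky (π/3) := by
      push_neg at hcase
      rcases lt_or_ge (π/2) α with h | h1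
      · have := LobachevskyAux.caseB hβ hγ h (by linarith)
        linarith
      rcases lt_or_ge (π/2) β with h | h2
      · have := LobachevskyAux.caseB hα hγ h (by linarith)
        linarith
      · have h3 := hcase h1 h2
        have := LobachevskyAux.caseB hα hβ h3 hsum
        linarith
    refine ⟨hlt.le, fun heq => absurd heq hlt.ne, ?_⟩
    rintro ⟨rfl, rfl, rfl⟩
    exact absurd ⟨by linarith, by linarith, by linarith⟩ hcase
end
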